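/- Let G be a finite simple graph (not a disjoint union of complete graphs). Then there exists a vertex v of G such that η(G − v) ≤ η(G) and η(G_v) < η(G). In other words, the invariant η is a compatible map: it satisfies η(Ĝ) ≤ η(G), η(⊔ K_{n_i}) ≥ t for a disjoint union of t complete graphs with all n_i ≥ 2, and the above vertex condition for graphs that are not disjoint unions of complete graphs. -/

import Mathlib

open SimpleGraph

variable {V : Type*}

/-- `H` is a clique disjoint edge set of `G`: a set of edges of `G` such that
no two distinct edges of `H` are contained in a common clique of `G`. -/
def CliqueDisjoint (G : SimpleGraph V) (H : Set (Sym2 V)) : Prop :=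
  H ⊆ G.edgeSet ∧ ∀ e ∈ H, ∀ f ∈ H, e ≠ f →
    ¬ ∃ K : Set V, G.IsClique K ∧ (∀ v ∈ e, v ∈ K) ∧ (∀ v ∈ f, v ∈ K)

/-- `eta G` is the maximum size of a clique disjoint edge set in `G`. -/
noncomputable def eta (G : SimpleGraph V) : ℕ :=
  sSup {n | ∃ H : Finset (Sym2 V), CliqueDisjoint G ↑H ∧ H.card = n}

/-- `Gv G v` is the graph obtained from `G` by adding all edges between neighbors of `v`. -/
def Gv (G : SimpleGraph V) (v : V) : SimpleGraph V :=
  G ⊔ SimpleGraph.fromRel (fun u w => G.Adj v u ∧ G.Adj v w)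

/-! A graph that is not a disjoint union of cliques contains an induced path
`a - v - b`. Deleting a vertex cannot increase `η`, since a clique disjoint edge set of an
induced subgraph stays clique disjoint in the whole graph. In `G_v` the closed neighbourhood
`N[v]` of `v` is a clique, so a maximum clique disjoint edge set `H` of `G_v` has at most one
edge inside `N[v]`, and every other edge of `H` is an edge of `G`. Removing that edge and
adding the two edges `va`, `vb` gives a clique disjoint edge set of `G` of size `|H| + 1`:
`va` and `vb` share no clique because `ab` is not an edge, and a clique of `G` through `va`
or `vb` lies inside `N[v]`. -/

namespace SimpleGraph

variable {G G' : SimpleGraph V} {e f : Sym2 V}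

def SharesClique (G : SimpleGraph V) (e f : Sym2 V) : Prop :=
  ∃ K : Set V, G.IsClique K ∧ (∀ x ∈ e, x ∈ K) ∧ (∀ x ∈ f, x ∈ K)

theorem SharesClique.symm : G.SharesClique e f → G.SharesClique f e :=
  fun ⟨K, hK, he, hf⟩ => ⟨K, hK, hf, he⟩

theorem SharesClique.mono (hle : G ≤ G') : G.SharesClique e f → G'.SharesClique e f :=
  fun ⟨K, hK, he, hf⟩ => ⟨K, hK.mono hle, he, hf⟩

theorem not_sharesClique_of_not_adj {a b : V} (ha : a ∈ e) (hb : b ∈ f) (hab : a ≠ b)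
    (hnab : ¬ G.Adj a b) : ¬ G.SharesClique e f :=
  fun ⟨_, hK, he, hf⟩ => hnab (hK (he a ha) (hf b hb) hab)

theorem SharesClique.subset_closedNbhd {v c : V} (h : G.SharesClique s(v, c) f) :
    ∀ x ∈ f, x ∈ insert v (G.neighborSet v) := by
  obtain ⟨K, hK, he, hf⟩ := h
  intro x hx
  by_cases hxv : x = v
  · exact Or.inl hxv
  · exact Or.inr (hK (he v (Sym2.mem_mk_left v c)) (hf x hx) (Ne.symm hxv))

theorem Reachable.exists_induced_path {u w : V} (h : G.Reachable u w) (hne : u ≠ w)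
    (hnadj : ¬ G.Adj u w) : ∃ v a b : V, G.Adj v a ∧ G.Adj v b ∧ a ≠ b ∧ ¬ G.Adj a b := by
  obtain ⟨p⟩ := h
  induction p with
  | nil => exact absurd rfl hne
  | @cons u x w hux q ih =>
    by_cases hxw : x = w
    · exact absurd (hxw ▸ hux) hnadj
    by_cases hadj : G.Adj x w
    · exact ⟨x, u, w, hux.symm, hadj, hne, hnadj⟩
    · exact ih hxw hadj

end SimpleGraph

namespace CliqueDisjoint

variable {G G' : SimpleGraph V} {H H' : Set (Sym2 V)}

theorem pairwise (hH : CliqueDisjoint G H) : H.Pairwise fun e f => ¬ G.SharesClique e f :=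
  hH.2

theorem subset (hH : CliqueDisjoint G H) (h : H' ⊆ H) : CliqueDisjoint G H' :=
  ⟨h.trans hH.1, hH.pairwise.mono h⟩

theorem of_le (hH : CliqueDisjoint G' H) (hle : G ≤ G') (hsub : H ⊆ G.edgeSet) :
    CliqueDisjoint G H :=
  ⟨hsub, hH.pairwise.mono' fun _ _ h hs => h (SharesClique.mono hle hs)⟩

theorem insert {e : Sym2 V} (hH : CliqueDisjoint G H) (he : e ∈ G.edgeSet)
    (h : ∀ f ∈ H, ¬ G.SharesClique e f) : CliqueDisjoint G (insert e H) :=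
  ⟨Set.insert_subset he hH.1, hH.pairwise.insert fun f hf _ => ⟨h f hf, fun hs => h f hf hs.symm⟩⟩

theorem subsingleton_of_isClique (hH : CliqueDisjoint G H) {K : Set V} (hK : G.IsClique K) :
    {e ∈ H | ∀ x ∈ e, x ∈ K}.Subsingleton :=
  fun _ he _ hf => by_contra fun hef => hH.pairwise he.1 hf.1 hef ⟨K, hK, he.2, hf.2⟩

theorem exists_subset_not_subset_clique {H : Finset (Sym2 V)} (hH : CliqueDisjoint G ↑H)
    {K : Set V} (hK : G.IsClique K) :
    ∃ H₁ ⊆ H, H.card ≤ H₁.card + 1 ∧ ∀ e ∈ H₁, ¬ ∀ x ∈ e, x ∈ K := by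
  classical
  refine ⟨H.filter fun e => ¬ ∀ x ∈ e, x ∈ K, Finset.filter_subset _ _, ?_,
    fun e he => (Finset.mem_filter.1 he).2⟩
  have hinside : (H.filter fun e => ∀ x ∈ e, x ∈ K).card ≤ 1 :=
    Finset.card_le_one.2 fun e he f hf =>
      hH.subsingleton_of_isClique hK (Finset.mem_filter.1 he) (Finset.mem_filter.1 hf)
  have hsplit := Finset.card_filter_add_card_filter_not (s := H) fun e => ∀ x ∈ e, x ∈ K
  omega

theorem map {W : Type*} {G' : SimpleGraph W} (hH : CliqueDisjoint G H) (φ : G ↪g G') :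
    CliqueDisjoint G' (φ.toEmbedding.sym2Map '' H) := by
  refine ⟨?_, ?_⟩
  · rintro _ ⟨e, he, rfl⟩
    exact (φ.map_mem_edgeSet_iff).2 (hH.1 he)
  · rintro _ ⟨e, he, rfl⟩ _ ⟨f, hf, rfl⟩ hef ⟨K, hK, heK, hfK⟩
    refine hH.pairwise he hf (fun h => hef (h ▸ rfl)) ⟨φ ⁻¹' K, ?_, ?_, ?_⟩
    · exact fun x hx y hy hxy => φ.map_adj_iff.1 (hK hx hy (φ.injective.ne hxy))
    · exact fun x hx => heK _ (Sym2.mem_map.2 ⟨x, hx, rfl⟩)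
    · exact fun x hx => hfK _ (Sym2.mem_map.2 ⟨x, hx, rfl⟩)

end CliqueDisjoint

theorem cliqueDisjoint_empty (G : SimpleGraph V) : CliqueDisjoint G ∅ :=
  ⟨Set.empty_subset _, Set.pairwise_empty _⟩

theorem nonempty_cliqueDisjoint_cards (G : SimpleGraph V) :
    {n | ∃ H : Finset (Sym2 V), CliqueDisjoint G ↑H ∧ H.card = n}.Nonempty :=
  ⟨0, ∅, by simpa using cliqueDisjoint_empty G, rfl⟩

theorem bddAbove_cliqueDisjoint_cards [Finite V] (G : SimpleGraph V) :
    BddAbove {n | ∃ H : Finset (Sym2 V), CliqueDisjoint G ↑H ∧ H.card = n} := by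
  have : Fintype V := Fintype.ofFinite V
  refine ⟨Fintype.card (Sym2 V), ?_⟩
  rintro _ ⟨H, -, rfl⟩
  exact H.card_le_univ

theorem CliqueDisjoint.card_le_eta [Finite V] {G : SimpleGraph V} {H : Finset (Sym2 V)}
    (hH : CliqueDisjoint G ↑H) : H.card ≤ eta G :=
  le_csSup (bddAbove_cliqueDisjoint_cards G) ⟨H, hH, rfl⟩

theorem exists_cliqueDisjoint_card_eq_eta [Finite V] (G : SimpleGraph V) :
    ∃ H : Finset (Sym2 V), CliqueDisjoint G ↑H ∧ H.card = eta G :=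
  Nat.sSup_mem (nonempty_cliqueDisjoint_cards G) (bddAbove_cliqueDisjoint_cards G)

theorem eta_le_of_embedding {W : Type*} [Finite W] {G : SimpleGraph V} {G' : SimpleGraph W}
    (φ : G ↪g G') : eta G ≤ eta G' := by
  refine csSup_le (nonempty_cliqueDisjoint_cards G) ?_
  rintro _ ⟨H, hH, rfl⟩
  have hmap := hH.map φ
  rw [← Finset.coe_map] at hmap
  simpa using hmap.card_le_eta

section Gv

variable {G : SimpleGraph V} {v : V}

theorem gv_adj {x y : V} : (Gv G v).Adj x y ↔ G.Adj x y ∨ (x ≠ y ∧ G.Adj v x ∧ G.Adj v y) := by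
  simp only [Gv, sup_adj, fromRel_adj]
  tauto

theorem le_gv : G ≤ Gv G v := le_sup_left

theorem isClique_gv_closedNbhd : (Gv G v).IsClique (insert v (G.neighborSet v)) := by
  rintro x (rfl | hx) y (rfl | hy) hxy
  · exact absurd rfl hxy
  · exact gv_adj.2 (Or.inl hy)
  · exact (gv_adj.2 (Or.inl hx)).symm
  · exact gv_adj.2 (Or.inr ⟨hxy, hx, hy⟩)

theorem mem_edgeSet_of_mem_edgeSet_gv {e : Sym2 V} (he : e ∈ (Gv G v).edgeSet)
    (hN : ¬ ∀ x ∈ e, x ∈ insert v (G.neighborSet v)) : e ∈ G.edgeSet := by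
  induction e using Sym2.ind with
  | _ x y =>
    rcases gv_adj.1 he with h | ⟨-, hx, hy⟩
    · exact h
    · refine absurd ?_ hN
      simp only [Sym2.mem_iff, forall_eq_or_imp, forall_eq]
      exact ⟨Or.inr hx, Or.inr hy⟩

theorem eta_gv_lt [Finite V] {a b : V} (ha : G.Adj v a) (hb : G.Adj v b) (hab : a ≠ b)
    (hnab : ¬ G.Adj a b) : eta (Gv G v) < eta G := by
  classical
  obtain ⟨H, hH, hcard⟩ := exists_cliqueDisjoint_card_eq_eta (Gv G v)
  obtain ⟨H₁, hsub, hcard₁, hout⟩ := hH.exists_subset_not_subset_clique isClique_gv_closedNbhd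
  have hH₁ : CliqueDisjoint G ↑H₁ :=
    (hH.subset (Finset.coe_subset.2 hsub)).of_le le_gv fun e he =>
      mem_edgeSet_of_mem_edgeSet_gv (hH.1 (hsub he)) (hout e he)
  have hspoke {c : V} (hc : G.Adj v c) : ∀ f ∈ (H₁ : Set (Sym2 V)), ¬ G.SharesClique s(v, c) f :=
    fun f hf h => hout f hf h.subset_closedNbhd
  have hspoke_notMem {c : V} (hc : G.Adj v c) : s(v, c) ∉ H₁ :=
    fun h => hout _ h (by simp [hc])
  have hH' : CliqueDisjoint G ↑(insert s(v, a) (insert s(v, b) H₁)) := by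
    rw [Finset.coe_insert, Finset.coe_insert]
    refine (hH₁.insert hb (hspoke hb)).insert ha ?_
    rintro f (rfl | hf)
    · exact not_sharesClique_of_not_adj (Sym2.mem_mk_right v a) (Sym2.mem_mk_right v b) hab hnab
    · exact hspoke ha f hf
  calc eta (Gv G v) = H.card := hcard.symm
    _ < (insert s(v, a) (insert s(v, b) H₁)).card := by
      rw [Finset.card_insert_of_notMem (by simp [hab, hb.ne, hspoke_notMem ha]),
        Finset.card_insert_of_notMem (hspoke_notMem hb)]
      omega
    _ ≤ eta G := hH'.card_le_eta

end Gv

/-- If `G` is not a disjoint union of complete graphs, there is a vertex `v` with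
`η(G - v) ≤ η(G)` and `η(G_v) < η(G)`; this is the key condition making `η` a
compatible map. -/
theorem eta_compatible_vertex [Fintype V] (G : SimpleGraph V)
    (h : ∃ u w : V, u ≠ w ∧ G.Reachable u w ∧ ¬ G.Adj u w) :
    ∃ v : V, eta (G.induce {u : V | u ≠ v}) ≤ eta G ∧ eta (Gv G v) < eta G := by
  obtain ⟨u, w, hne, hreach, hnadj⟩ := h
  obtain ⟨v, a, b, hva, hvb, hab, hnab⟩ := hreach.exists_induced_path hne hnadj
  exact ⟨v, eta_le_of_embedding (Embedding.induce _), eta_gv_lt hva hvb hab hnab⟩
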